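/- arXiv:2203.03351 — 4 statements merged into one kernel-verified Lean document; each statement's English description precedes it below -/
import Mathlib

section
/- Let {c_j} be a non-negative real sequence, ς > 0, and define d_k = Σ_{j=0}^{k} c_j. Then for every k ≥ 0, Σ_{j=0}^{k} c_j/(ς + d_j) ≤ log((ς + d_k)/ς). -/
/-!
With `d n = ς + ∑_{i<n} c i`, each term is `(d (j+1) - d j) / d (j+1) ≤ log d (j+1) - log d j`
by `1 - 1/x ≤ log x`, and the right-hand sides telescope.
-/

open Finset

lemma Real.sub_div_le_log_sub_log {a b : ℝ} (ha : 0 < a) (hab : a ≤ b) :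
    (b - a) / b ≤ Real.log b - Real.log a := by
  have hb : 0 < b := ha.trans_le hab
  have h := Real.one_sub_inv_le_log_of_pos (div_pos hb ha)
  rwa [Real.log_div hb.ne' ha.ne', inv_div, one_sub_div hb.ne'] at h

lemma Monotone.sum_sub_div_le_log_sub_log {d : ℕ → ℝ} (hd : Monotone d) (hd0 : 0 < d 0)
    (n : ℕ) :
    ∑ j ∈ range n, (d (j + 1) - d j) / d (j + 1) ≤ Real.log (d n) - Real.log (d 0) := by
  calc ∑ j ∈ range n, (d (j + 1) - d j) / d (j + 1)
      ≤ ∑ j ∈ range n, (Real.log (d (j + 1)) - Real.log (d j)) :=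
        sum_le_sum fun j _ =>
          Real.sub_div_le_log_sub_log (hd0.trans_le (hd j.zero_le)) (hd j.le_succ)
    _ = Real.log (d n) - Real.log (d 0) := sum_range_sub (fun j => Real.log (d j)) n

theorem stmt_4 (c : ℕ → ℝ) (hc : ∀ j, 0 ≤ c j) (ς : ℝ) (hς : 0 < ς) (k : ℕ) :
    ∑ j ∈ Finset.range (k + 1),
        c j / (ς + ∑ i ∈ Finset.range (j + 1), c i)
      ≤ Real.log ((ς + ∑ i ∈ Finset.range (k + 1), c i) / ς) := by
  set d : ℕ → ℝ := fun n => ς + ∑ i ∈ range n, c i with hd_def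
  have hd : Monotone d := monotone_nat_of_le_succ fun n => by
    simpa [hd_def, sum_range_succ] using hc n
  have hd0 : d 0 = ς := by simp [hd_def]
  have hincr : ∀ j, d (j + 1) - d j = c j := fun j => by
    simp only [hd_def, sum_range_succ]; ring
  have hpos : 0 < d (k + 1) := hς.trans_le (hd0 ▸ hd (k + 1).zero_le)
  have key := hd.sum_sub_div_le_log_sub_log (hd0 ▸ hς) (k + 1)
  simp only [hincr, hd0] at key
  rwa [Real.log_div hpos.ne' hς.ne']
end

section
/- Let w > 0, α ∈ (0,1), and β > 3α/2^α. If w^α ≤ β·log(2w), then w ≤ [−(β/α)·W_{−1}(−α/(β·2^α))]^{1/α}, where W_{−1} is the secondary real branch of the Lambert W function. -/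
/-!
Put `c = β / α`, `z = -α / (β * 2 ^ α)` and `s = -w ^ α / c`. Exponentiating the hypothesis
`w ^ α ≤ β * log (2 * w)` turns it into `s * exp s ≤ z`. On `(-∞, -1]` the map `x ↦ x * exp x`
decreases from `0⁻` to `-1/e`, and `W₋₁ z` is the point of that ray where it takes the value `z`,
so `W₋₁ z ≤ s` (trivially if `s > -1`), i.e. `w ^ α ≤ -c * W₋₁ z`.
-/

open Real Set Filter

/-- The secondary real branch `W₋₁` of the Lambert W function, defined on
`[-1/e, 0)` as the unique `w ≤ -1` with `w * exp w = z`. -/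
noncomputable def lambertWm1 (z : ℝ) : ℝ :=
  sInf {w : ℝ | w * Real.exp w = z ∧ w ≤ -1}

lemma strictAntiOn_mul_exp_Iic_neg_one : StrictAntiOn (fun x : ℝ => x * exp x) (Iic (-1)) := by
  refine strictAntiOn_of_deriv_neg (convex_Iic _) (by fun_prop) fun x hx => ?_
  rw [interior_Iic, mem_Iio] at hx
  have hd : HasDerivAt (fun x => x * exp x) (1 * exp x + x * exp x) x :=
    (hasDerivAt_id x).mul (hasDerivAt_exp x)
  rw [hd.deriv]
  nlinarith [exp_pos x]

lemma tendsto_mul_exp_atBot : Tendsto (fun x : ℝ => x * exp x) atBot (nhds 0) := by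
  have h := (tendsto_pow_mul_exp_neg_atTop_nhds_zero 1).comp tendsto_neg_atBot_atTop
  simpa [Function.comp_def] using h.neg

lemma exists_mul_exp_eq_of_mem_Ico {z : ℝ} (hz : z ∈ Ico (-exp (-1)) 0) :
    ∃ x ≤ -1, x * exp x = z := by
  obtain ⟨A, hA⟩ := ((tendsto_mul_exp_atBot.eventually (lt_mem_nhds hz.2)).and
    (eventually_le_atBot (-1))).exists
  obtain ⟨x, hx, hxz⟩ := intermediate_value_Icc' hA.2
    (f := fun x : ℝ => x * exp x) (by fun_prop)
    ⟨by simpa using hz.1, hA.1.le⟩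
  exact ⟨x, hx.2, hxz⟩

lemma lambertWm1_eq {x z : ℝ} (hx : x ≤ -1) (hxz : x * exp x = z) : lambertWm1 z = x := by
  have hset : {v : ℝ | v * exp v = z ∧ v ≤ -1} = {x} := by
    ext v
    refine ⟨fun ⟨hvz, hv⟩ => strictAntiOn_mul_exp_Iic_neg_one.injOn hv hx (hvz.trans hxz.symm),
      fun hv => hv ▸ ⟨hxz, hx⟩⟩
  rw [lambertWm1, hset, csInf_singleton]

lemma lambertWm1_le_neg_one_and_mul_exp {z : ℝ} (hz : z ∈ Ico (-exp (-1)) 0) :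
    lambertWm1 z ≤ -1 ∧ lambertWm1 z * exp (lambertWm1 z) = z := by
  obtain ⟨x, hx, hxz⟩ := exists_mul_exp_eq_of_mem_Ico hz
  exact lambertWm1_eq hx hxz ▸ ⟨hx, hxz⟩

lemma lambertWm1_le_of_mul_exp_le {s z : ℝ} (hz : z ∈ Ico (-exp (-1)) 0)
    (hs : s * exp s ≤ z) : lambertWm1 z ≤ s := by
  obtain ⟨hW, hWz⟩ := lambertWm1_le_neg_one_and_mul_exp hz
  rcases le_total s (-1) with hs1 | hs1
  · by_contra! hsW
    exact (strictAntiOn_mul_exp_Iic_neg_one hs1 hW hsW).not_ge (hs.trans hWz.ge)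
  · linarith

lemma neg_div_mem_Ico_of_three_mul_lt {a b : ℝ} (ha : 0 < a) (hab : 3 * a < b) :
    -a / b ∈ Ico (-exp (-1)) 0 := by
  have hb : 0 < b := by linarith
  have h3 : a / b < 1 / 3 := by
    rw [div_lt_iff₀ hb]
    linarith
  refine ⟨?_, by rw [neg_div]; exact neg_neg_of_pos (by positivity)⟩
  rw [neg_div, neg_le_neg_iff]
  linarith [exp_neg_one_gt_d9]

lemma mul_exp_le_of_rpow_le_mul_log {w α β : ℝ} (hw : 0 < w) (hα : 0 < α) (hβ : 0 < β)
    (h : w ^ α ≤ β * log (2 * w)) :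
    -(α / β * w ^ α) * exp (-(α / β * w ^ α)) ≤ -α / (β * 2 ^ α) := by
  have hexp : exp (α / β * w ^ α) ≤ 2 ^ α * w ^ α :=
    calc exp (α / β * w ^ α) ≤ exp (α * log (2 * w)) := by
          refine exp_le_exp.mpr ?_
          rw [div_mul_eq_mul_div, div_le_iff₀ hβ]
          nlinarith
      _ = 2 ^ α * w ^ α := by
          rw [mul_comm, ← rpow_def_of_pos (by positivity), mul_rpow (by norm_num) hw.le]
  have hcancel : α / β * w ^ α * (β * 2 ^ α) = α * (2 ^ α * w ^ α) := by field_simp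
  rw [exp_neg, ← div_eq_mul_inv, div_le_div_iff₀ (exp_pos _) (by positivity), neg_mul, hcancel]
  nlinarith [mul_le_mul_of_nonneg_left hexp hα.le]

theorem stmt_5 (w α β : ℝ) (hw : 0 < w) (hα : α ∈ Set.Ioo (0 : ℝ) 1)
    (hβ : 3 * α / 2 ^ α < β) (h : w ^ α ≤ β * Real.log (2 * w)) :
    w ≤ (-(β / α) * lambertWm1 (-α / (β * 2 ^ α))) ^ (1 / α) := by
  have hα0 : 0 < α := hα.1
  have hβ0 : 0 < β := lt_trans (by positivity) hβ
  have hz : -α / (β * 2 ^ α) ∈ Ico (-exp (-1)) 0 :=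
    neg_div_mem_Ico_of_three_mul_lt hα0 (by rwa [div_lt_iff₀ (by positivity)] at hβ)
  have hW := lambertWm1_le_of_mul_exp_le hz (mul_exp_le_of_rpow_le_mul_log hw hα0 hβ0 h)
  have hpow : w ^ α ≤ -(β / α) * lambertWm1 (-α / (β * 2 ^ α)) :=
    calc w ^ α = -(β / α) * -(α / β * w ^ α) := by field_simp
      _ ≤ _ := mul_le_mul_of_nonpos_left hW (neg_nonpos.mpr (by positivity))
  rwa [one_div, le_rpow_inv_iff_of_pos hw.le ((by positivity : 0 ≤ w ^ α).trans hpow) hα0]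
end

section
/- Let a ≥ 0, b ≥ 0, μ ∈ (0,½), ν ∈ (0,⅓), θ_a > 0, θ_b > 0, θ ≥ 0, and suppose a^{1−μ} + b^{1−2ν} ≤ θ_a·a^{1−2μ} + θ_b·b^{1−3ν} + θ. Then a ≤ max[(θ/θ_a)^{1/(1−2μ)}, 2^{1/(1−μ)}·(2θ_b)^{(1−2ν)/(ν(1−μ))}, (4θ_a)^{1/μ}] and b ≤ max[(θ/θ_b)^{1/(1−3ν)}, 2^{1/(1−2ν)}·(2θ_a)^{(1−μ)/(μ(1−2ν))}, (4θ_b)^{1/ν}]. -/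
/-!
Writing the hypothesis as `a^α + b^β ≤ θa a^(α-μ) + θb b^(β-ν) + θ`, either `θ` is dominated by
`θa a^(α-μ)` (otherwise `a` is below the first bound) or it can be absorbed into that term. The
`b`-terms contribute at most `θb^(β/ν)`: if `b^ν ≥ θb` they are nonpositive, and otherwise `b` is
bounded by `θb^(1/ν)`. What remains, `a^α ≤ 2θa a^(α-μ) + θb^(β/ν)`, forces one of the two summands
to be at least `a^α / 2`, which gives the other two bounds. The bound on `b` is symmetric.
-/

namespace Real

lemma mul_rpow_sub_le_rpow_add_rpow_div {b c β ν : ℝ} (hb : 0 ≤ b) (hc : 0 ≤ c) (hν : 0 < ν)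
    (hνβ : ν ≤ β) : c * b ^ (β - ν) ≤ b ^ β + c ^ (β / ν) := by
  rcases le_or_gt c (b ^ ν) with hcb | hbc
  · have hsplit : b ^ β = b ^ ν * b ^ (β - ν) := by
      rw [← rpow_add' hb (by linarith)]; ring_nf
    have : c * b ^ (β - ν) ≤ b ^ β := by
      rw [hsplit]; exact mul_le_mul_of_nonneg_right hcb (rpow_nonneg hb _)
    linarith [rpow_nonneg hc (β / ν)]
  · have hc_pos : 0 < c := (rpow_nonneg hb ν).trans_lt hbc
    have hb_le : b ^ (β - ν) ≤ c ^ ((β - ν) / ν) := by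
      calc b ^ (β - ν) = (b ^ ν) ^ ((β - ν) / ν) := by
            rw [← rpow_mul hb]; congr 1; field_simp
        _ ≤ c ^ ((β - ν) / ν) :=
            rpow_le_rpow (rpow_nonneg hb ν) hbc.le (div_nonneg (by linarith) hν.le)
    calc c * b ^ (β - ν) ≤ c * c ^ ((β - ν) / ν) := mul_le_mul_of_nonneg_left hb_le hc
      _ = c ^ (β / ν) := by
          rw [← rpow_one_add' hc (by positivity)]; congr 1; field_simp; ring
      _ ≤ b ^ β + c ^ (β / ν) := le_add_of_nonneg_left (rpow_nonneg hb β)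

lemma le_max_of_rpow_le_mul_rpow_sub_add {a c d α μ : ℝ} (ha : 0 ≤ a) (hc : 0 ≤ c) (hμ : 0 < μ)
    (hα : 0 < α) (h : a ^ α ≤ c * a ^ (α - μ) + d) :
    a ≤ max ((2 * c) ^ (1 / μ)) ((2 * d) ^ (1 / α)) := by
  rcases ha.eq_or_lt with rfl | ha_pos
  · exact le_max_of_le_left (rpow_nonneg (by positivity) _)
  rcases le_or_gt d (c * a ^ (α - μ)) with hd | hd
  · refine le_max_of_le_left ?_
    have hsplit : a ^ α = a ^ μ * a ^ (α - μ) := by rw [← rpow_add ha_pos]; ring_nf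
    have haμ : a ^ μ ≤ 2 * c :=
      le_of_mul_le_mul_right (by linarith) (rpow_pos_of_pos ha_pos (α - μ))
    rwa [one_div, le_rpow_inv_iff_of_pos ha ((rpow_nonneg ha μ).trans haμ) hμ]
  · have haα : a ^ α ≤ 2 * d := by linarith
    refine le_max_of_le_right ?_
    rwa [one_div, le_rpow_inv_iff_of_pos ha ((rpow_nonneg ha α).trans haα) hα]

lemma le_max_max_of_rpow_add_rpow_le {a b α β μ ν θa θb θ : ℝ} (ha : 0 ≤ a) (hb : 0 ≤ b)
    (hμ : 0 < μ) (hμα : μ < α) (hν : 0 < ν) (hνβ : ν ≤ β) (hθa : 0 < θa) (hθb : 0 ≤ θb)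
    (hθ : 0 ≤ θ) (h : a ^ α + b ^ β ≤ θa * a ^ (α - μ) + θb * b ^ (β - ν) + θ) :
    a ≤ max ((θ / θa) ^ (1 / (α - μ)))
      (max (2 ^ (1 / α) * (2 * θb) ^ (β / (ν * α))) ((4 * θa) ^ (1 / μ))) := by
  have hα : 0 < α := hμ.trans hμα
  rcases le_or_gt a ((θ / θa) ^ (1 / (α - μ))) with haθ | hθa_lt
  · exact le_max_of_le_left haθ
  have hθ_lt : θ < θa * a ^ (α - μ) := by
    rwa [one_div, rpow_inv_lt_iff_of_pos (by positivity) ha (by linarith), div_lt_iff₀' hθa]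
      at hθa_lt
  have hb_terms := mul_rpow_sub_le_rpow_add_rpow_div hb hθb hν hνβ
  have ha_bound : a ≤ max ((2 * (2 * θa)) ^ (1 / μ)) ((2 * θb ^ (β / ν)) ^ (1 / α)) :=
    le_max_of_rpow_le_mul_rpow_sub_add ha (by positivity) hμ hα (by linarith)
  have hd : (2 * θb ^ (β / ν)) ^ (1 / α) ≤ 2 ^ (1 / α) * (2 * θb) ^ (β / (ν * α)) := by
    rw [mul_rpow zero_le_two (rpow_nonneg hθb _), ← rpow_mul hθb, div_mul_div_comm, mul_one]
    gcongr
    · exact div_nonneg (by linarith) (by positivity)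
    · linarith
  rw [← mul_assoc, show (2 : ℝ) * 2 = 4 by norm_num] at ha_bound
  exact le_max_of_le_right <|
    ha_bound.trans (max_le (le_max_right _ _) (hd.trans (le_max_left _ _)))

end Real

theorem stmt_9 (a b μ ν θa θb θ : ℝ)
    (ha : 0 ≤ a) (hb : 0 ≤ b)
    (hμ : μ ∈ Set.Ioo (0 : ℝ) (1/2)) (hν : ν ∈ Set.Ioo (0 : ℝ) (1/3))
    (hθa : 0 < θa) (hθb : 0 < θb) (hθ : 0 ≤ θ)
    (h : a ^ (1 - μ) + b ^ (1 - 2*ν)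
          ≤ θa * a ^ (1 - 2*μ) + θb * b ^ (1 - 3*ν) + θ) :
    a ≤ max ((θ / θa) ^ (1 / (1 - 2*μ)))
          (max ((2 : ℝ) ^ (1 / (1 - μ)) * (2*θb) ^ ((1 - 2*ν) / (ν * (1 - μ))))
               ((4*θa) ^ (1 / μ))) ∧
    b ≤ max ((θ / θb) ^ (1 / (1 - 3*ν)))
          (max ((2 : ℝ) ^ (1 / (1 - 2*ν)) * (2*θa) ^ ((1 - μ) / (μ * (1 - 2*ν))))
               ((4*θb) ^ (1 / ν))) := by
  obtain ⟨hμ0, hμ1⟩ := hμ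
  obtain ⟨hν0, hν1⟩ := hν
  have hμ_sub : 1 - μ - μ = 1 - 2 * μ := by ring
  have hν_sub : 1 - 2 * ν - ν = 1 - 3 * ν := by ring
  constructor
  · simpa only [hμ_sub] using Real.le_max_max_of_rpow_add_rpow_le (α := 1 - μ) (β := 1 - 2 * ν)
      ha hb hμ0 (by linarith) hν0 (by linarith) hθa hθb.le hθ (by rwa [hμ_sub, hν_sub])
  · simpa only [hν_sub] using Real.le_max_max_of_rpow_add_rpow_le (α := 1 - 2 * ν) (β := 1 - μ)
      hb ha hν0 (by linarith) hμ0 (by linarith) hθb hθa.le hθ (by rw [hμ_sub, hν_sub]; linarith)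
end

section
/- Let a > 0, b ≥ 0, ν ∈ (0,⅓], θ_a ≥ 1, θ ≥ 0. If a^{1/2} + b^{1−2ν} ≤ θ_a·log(2a) + θ, then a ≤ κ_a := max[½·e^{θ/θ_a}, σ(½, 2θ_a)] and b ≤ (θ_a·log(2κ_a) + θ)^{1/(1−2ν)}, where σ(α,β) := [−(β/α)·W_{−1}(−α/(β·2^α))]^{1/α}. -/
/-!
Write `σ = σ(α, β)` and `u = σ ^ α`. Unwinding the definition of `W₋₁`, `u` is the largest root
of `u = (β / α) log (2 ^ α u)` and satisfies `u > β / α`. Past such a root the concave function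
`X ↦ (β / α) log (2 ^ α X)` has slope `< 1`, so `β log (2x) < x ^ α` for every `x > σ`.
If `a` exceeded both `½ e^{θ/θₐ}` and `σ(½, 2θₐ)`, then `θ < θₐ log (2a)` and the hypothesis would
give `√a < 2θₐ log (2a) < √a`. The bound on `b` follows by monotonicity of `log`.
-/

open Real Set Filter

/-- `σ(α,β)` from the paper. -/
noncomputable def sigmaAB (α β : ℝ) : ℝ :=
  (-(β / α) * lambertWm1 (-α / (β * 2 ^ α))) ^ (1 / α)

lemma strictAntiOn_mul_exp_Iic : StrictAntiOn (fun w : ℝ => w * exp w) (Iic (-1)) := by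
  refine strictAntiOn_of_deriv_neg (convex_Iic _) (by fun_prop) fun x hx => ?_
  rw [interior_Iic, mem_Iio] at hx
  have hd : HasDerivAt (fun w : ℝ => w * exp w) (1 * exp x + x * exp x) x :=
    (hasDerivAt_id x).mul (hasDerivAt_exp x)
  rw [hd.deriv]
  nlinarith [exp_pos x]

lemma lambertWm1_mul_exp {w : ℝ} (hw : w ≤ -1) : lambertWm1 (w * exp w) = w := by
  have hset : {v : ℝ | v * exp v = w * exp w ∧ v ≤ -1} = {w} := by
    ext v
    refine ⟨fun ⟨hv, hv1⟩ => strictAntiOn_mul_exp_Iic.injOn hv1 hw hv, ?_⟩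
    rintro rfl
    exact ⟨rfl, hw⟩
  rw [lambertWm1, hset, csInf_singleton]

lemma exists_lt_neg_one_mul_exp_eq {z : ℝ} (hz₁ : -exp (-1) < z) (hz₀ : z < 0) :
    ∃ w < -1, w * exp w = z := by
  -- `t e^{-t} → 0` as `t → ∞` provides a point `w₁ ≤ -1` with `w₁ e^{w₁} > z`
  obtain ⟨t, ht, ht1⟩ := (((tendsto_pow_mul_exp_neg_atTop_nhds_zero 1).eventually
    (gt_mem_nhds (neg_pos.mpr hz₀))).and (eventually_ge_atTop 1)).exists
  have hw₁ : z ≤ -t * exp (-t) := by simp only [pow_one] at ht; linarith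
  have hz : z ∈ Icc ((-1) * exp (-1)) (-t * exp (-t)) := ⟨by linarith, hw₁⟩
  have hcont : Continuous fun w : ℝ => w * exp w := by fun_prop
  obtain ⟨w, ⟨-, hw⟩, hwz⟩ := intermediate_value_Icc' (by linarith) hcont.continuousOn hz
  refine ⟨w, lt_of_le_of_ne hw ?_, hwz⟩
  rintro rfl
  simp only [neg_one_mul] at hwz
  exact hz₁.ne hwz

lemma mul_log_lt_of_eq_mul_log {c k u X : ℝ} (hk : 0 < k) (hcu : c < u) (hc : 0 < c)
    (hu : u = c * log (k * u)) (hX : u < X) : c * log (k * X) < X := by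
  have hu₀ : 0 < u := hc.trans hcu
  have hXu : 0 < X / u := div_pos (hu₀.trans hX) hu₀
  have hsplit : log (k * X) = log (k * u) + log (X / u) := by
    rw [← log_mul (by positivity) hXu.ne']
    field_simp
  have hlog : log (X / u) ≤ X / u - 1 := log_le_sub_one_of_pos hXu
  calc c * log (k * X) = u + c * log (X / u) := by rw [hsplit, mul_add, ← hu]
    _ ≤ u + c * (X / u - 1) := by gcongr
    _ = u + c / u * (X - u) := by field_simp
    _ < u + 1 * (X - u) := by gcongr; exact (div_lt_one hu₀).mpr hcu
    _ = X := by ring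

lemma mul_log_two_mul_lt_rpow_of_sigmaAB_lt {α β x : ℝ} (hα : 0 < α) (hβ : 0 < β)
    (hαβ : α / (β * 2 ^ α) < exp (-1)) (hx : sigmaAB α β < x) : β * log (2 * x) < x ^ α := by
  have h2α : 0 < (2 : ℝ) ^ α := by positivity
  obtain ⟨w, hw, hwz⟩ := exists_lt_neg_one_mul_exp_eq (z := -α / (β * 2 ^ α))
    (by rw [neg_div]; exact neg_lt_neg hαβ)
    (div_neg_of_neg_of_pos (neg_neg_of_pos hα) (by positivity))
  set u := -(β / α) * w with hu_def
  have hσ : sigmaAB α β = u ^ (1 / α) := by rw [sigmaAB, ← hwz, lambertWm1_mul_exp hw.le]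
  have hcu : β / α < u := by rw [hu_def]; nlinarith [div_pos hβ hα]
  have hu₀ : 0 < u := (div_pos hβ hα).trans hcu
  have hexp : exp (-w) = 2 ^ α * u := by
    have hprod : 2 ^ α * u * exp w = 1 := by
      calc 2 ^ α * u * exp w = -(2 ^ α * β / α) * (w * exp w) := by rw [hu_def]; ring
        _ = 1 := by rw [hwz]; field_simp
    rw [exp_neg, inv_eq_of_mul_eq_one_left hprod]
  have hfix : u = β / α * log (2 ^ α * u) := by rw [← hexp, log_exp, hu_def]; ring
  have hx₀ : 0 < x := (rpow_pos_of_pos hu₀ _).trans (hσ ▸ hx)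
  have hX : u < x ^ α := by
    have := rpow_lt_rpow (by positivity) (hσ ▸ hx) hα
    rwa [← rpow_mul hu₀.le, one_div_mul_cancel hα.ne', rpow_one] at this
  have key := mul_log_lt_of_eq_mul_log h2α hcu (div_pos hβ hα) hfix hX
  rwa [← mul_rpow zero_le_two hx₀.le, log_rpow (by positivity), ← mul_assoc,
    div_mul_cancel₀ _ hα.ne'] at key

lemma le_max_sigmaAB_of_rpow_le {α a θa θ : ℝ} (hα : 0 < α) (hθa : 0 < θa)
    (hαθ : α / (2 * θa * 2 ^ α) < exp (-1)) (h : a ^ α ≤ θa * log (2 * a) + θ) :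
    a ≤ max ((1 / 2) * exp (θ / θa)) (sigmaAB α (2 * θa)) := by
  by_contra! hlt
  obtain ⟨hexp, hσ⟩ := max_lt_iff.mp hlt
  have hθ : θ < θa * log (2 * a) := by
    have : θ / θa < log (2 * a) :=
      (lt_log_iff_exp_lt (by linarith [exp_pos (θ / θa)])).mpr (by linarith)
    rwa [div_lt_iff₀' hθa] at this
  have := mul_log_two_mul_lt_rpow_of_sigmaAB_lt hα (by positivity) hαθ hσ
  linarith

theorem stmt_11_general (a b ν θa θ : ℝ) (ha : 0 < a) (hb : 0 ≤ b)
    (hν : ν ∈ Set.Ioc (0 : ℝ) (1/3)) (hθa : 1 ≤ θa)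
    (h : a ^ ((1:ℝ)/2) + b ^ (1 - 2*ν) ≤ θa * Real.log (2*a) + θ) :
    a ≤ max ((1/2) * Real.exp (θ / θa)) (sigmaAB (1/2) (2*θa)) ∧
    b ≤ (θa * Real.log (2 * max ((1/2) * Real.exp (θ / θa)) (sigmaAB (1/2) (2*θa)))
          + θ) ^ (1 / (1 - 2*ν)) := by
  have hθa₀ : 0 < θa := one_pos.trans_le hθa
  have hside : (1 / 2 : ℝ) / (2 * θa * 2 ^ (1 / 2 : ℝ)) < exp (-1) := by
    have h2 : (1 : ℝ) ≤ 2 ^ (1 / 2 : ℝ) := one_le_rpow one_le_two (by norm_num)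
    have he : (1 / 4 : ℝ) < exp (-1) := by
      rw [exp_neg, one_div]
      exact inv_strictAnti₀ (exp_pos 1) (by linarith [exp_one_lt_d9])
    calc (1 / 2 : ℝ) / (2 * θa * 2 ^ (1 / 2 : ℝ)) ≤ 1 / 2 / (2 * 1 * 1) := by gcongr
      _ < exp (-1) := by linarith
  have hb₀ := rpow_nonneg hb (1 - 2 * ν)
  have ha_le : a ≤ max ((1 / 2) * exp (θ / θa)) (sigmaAB (1 / 2) (2 * θa)) :=
    le_max_sigmaAB_of_rpow_le one_half_pos hθa₀ hside (by linarith)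
  refine ⟨ha_le, ?_⟩
  set κ := max ((1 / 2) * exp (θ / θa)) (sigmaAB (1 / 2) (2 * θa))
  have hlog : θa * log (2 * a) ≤ θa * log (2 * κ) := by gcongr
  have hbM : b ^ (1 - 2 * ν) ≤ θa * log (2 * κ) + θ := by
    linarith [rpow_nonneg ha.le (1 / 2 : ℝ)]
  rw [one_div, le_rpow_inv_iff_of_pos hb (hb₀.trans hbM) (by linarith [hν.2])]
  exact hbM

theorem stmt_11 (a b ν θa θ : ℝ) (ha : 0 < a) (hb : 0 ≤ b)
    (hν : ν ∈ Set.Ioc (0 : ℝ) (1/3)) (hθa : 1 ≤ θa) (hθ : 0 ≤ θ)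
    (h : a ^ ((1:ℝ)/2) + b ^ (1 - 2*ν) ≤ θa * Real.log (2*a) + θ) :
    a ≤ max ((1/2) * Real.exp (θ / θa)) (sigmaAB (1/2) (2*θa)) ∧
    b ≤ (θa * Real.log (2 * max ((1/2) * Real.exp (θ / θa)) (sigmaAB (1/2) (2*θa)))
          + θ) ^ (1 / (1 - 2*ν)) :=
  stmt_11_general a b ν θa θ ha hb hν hθa h
end
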